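/- If the push-relabel algorithm for polymatroid sum terminates (i.e., every undersold item e has Θ(e) = m) while maintaining the level invariants (L1) and (L2), then the resulting allocation z = (z_1,…,z_n) is an optimal solution to the polymatroid sum problem max Σ_e min{Σ_i z_i(e), b(e)}. -/

import Mathlib

open Finset

variable {E : Type*} [Fintype E] [DecidableEq E]

/-- Characteristic (unit) vector of an item. -/
def chi (e : E) : E → ℤ := fun f => if f = e then 1 else 0

/-- The integer box `[0, b]_ℤ`. -/
def Box (b : E → ℤ) : Set (E → ℤ) := {z | ∀ e, 0 ≤ z e ∧ z e ≤ b e}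

/-- M-convex set: exchange property. -/
def MConvex (B : Set (E → ℤ)) : Prop :=
  ∀ x ∈ B, ∀ y ∈ B, ∀ e : E, y e < x e →
    ∃ f : E, x f < y f ∧ x - chi e + chi f ∈ B ∧ y + chi e - chi f ∈ B

/-- `ρ` is the rank function of `B`: `ρ S = max {z(S) : z ∈ B}`. -/
def IsRank (B : Set (E → ℤ)) (ρ : Finset E → ℤ) : Prop :=
  ∀ S : Finset E, IsGreatest ((fun z : E → ℤ => ∑ e ∈ S, z e) '' B) (ρ S)

/-- A set `S` is tight for `z` if `z(S) = ρ S`. -/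
def Tight (ρ : Finset E → ℤ) (z : E → ℤ) (S : Finset E) : Prop :=
  ∑ e ∈ S, z e = ρ S

/-- `T` assigns to each item `e` the unique inclusion-wise minimal tight set containing `e`. -/
def MinTightAt (ρ : Finset E → ℤ) (z : E → ℤ) (T : E → Finset E) : Prop :=
  ∀ e, e ∈ T e ∧ Tight ρ z (T e) ∧ ∀ S, e ∈ S → Tight ρ z S → T e ⊆ S

/-- Level invariant (L1): oversold items have level 0. -/
def LevelInv1 {N : Type*} [Fintype N] (b : E → ℤ) (z : N → E → ℤ) (Θ : E → ℤ) : Prop :=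
  ∀ e, b e < ∑ i, z i e → Θ e = 0

/-- Level invariant (L2): `min_{f ∈ T_i(e)} Θ(f) ≥ Θ(e) − 1`. -/
def LevelInv2 {N : Type*} (Θ : E → ℤ) (T : N → E → Finset E) : Prop :=
  ∀ (i : N) (e : E), ∀ f ∈ T i e, Θ e - 1 ≤ Θ f

/-!
Let `ℓ` be a level that `Θ` does not take (there are `m + 1` levels and `m` items) and let `S` be
the set of items above it. By (L2) every minimal tight set `T_i(e)` with `e ∈ S` stays inside `S`,
so no exchange of `B_i` moves mass out of `S` while keeping `z_i` feasible; for an M-convex set this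
local optimality makes `z_i` maximise `y(S)` over `B_i`. By (L1) and termination, items of `S` are
not oversold and items outside are not undersold, so `z` attains the weak-duality bound
`∑_e min(x(e), b(e)) ≤ x(S) + b(E ∖ S) ≤ ∑_i ρ_i(S) + b(E ∖ S)`.
-/

omit [Fintype E] in
theorem sum_chi (S : Finset E) (e : E) : ∑ g ∈ S, chi e g = if e ∈ S then 1 else 0 :=
  sum_ite_eq' S e fun _ => 1

omit [Fintype E] in
theorem sum_add_chi_sub_chi (x : E → ℤ) (S : Finset E) (e f : E) :
    ∑ g ∈ S, (x + chi e - chi f) g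
      = ∑ g ∈ S, x g + (if e ∈ S then 1 else 0) - (if f ∈ S then 1 else 0) := by
  simp only [Pi.add_apply, Pi.sub_apply, sum_add_distrib, sum_sub_distrib, sum_chi]

omit [Fintype E] in
theorem add_chi_sub_chi_notMem_of_tight {B : Set (E → ℤ)} {ρ : Finset E → ℤ} (hρ : IsRank B ρ)
    {z : E → ℤ} {U : Finset E} (hU : Tight ρ z U) {e f : E} (he : e ∈ U) (hf : f ∉ U) :
    z + chi e - chi f ∉ B := fun hmem => by
  have hle := (hρ U).2 ⟨_, hmem, rfl⟩
  simp only [sum_add_chi_sub_chi, he, hf, if_true, if_false] at hle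
  rw [Tight] at hU
  omega

theorem sum_natAbs_sub_chi_add_chi_lt {x z : E → ℤ} {e f : E} (he : z e < x e) (hf : x f < z f) :
    ∑ g, ((x - chi e + chi f) g - z g).natAbs < ∑ g, (x g - z g).natAbs := by
  have hef : e ≠ f := by rintro rfl; omega
  refine sum_lt_sum (fun g _ => ?_) ⟨e, mem_univ e, ?_⟩
  · simp only [Pi.add_apply, Pi.sub_apply, chi]
    split_ifs <;> subst_vars <;> omega
  · simp only [Pi.add_apply, Pi.sub_apply, chi, if_neg hef, if_true]
    omega

theorem sum_le_of_forall_exchange_notMem {B : Set (E → ℤ)} (hB : MConvex B) {z : E → ℤ}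
    (hz : z ∈ B) {S : Finset E} (hS : ∀ e ∈ S, ∀ f ∉ S, z + chi e - chi f ∉ B) :
    ∀ y ∈ B, ∑ g ∈ S, y g ≤ ∑ g ∈ S, z g := by
  intro y hy
  induction hd : ∑ g, (y g - z g).natAbs using Nat.strong_induction_on generalizing y with
  | _ d ih =>
  by_contra! hlt
  obtain ⟨e, heS, he⟩ := exists_lt_of_sum_lt hlt
  obtain ⟨f, hf, hy', hz'⟩ := hB y hy z hz e he
  have hfS : f ∈ S := by_contra fun hfS => hS e heS f hfS hz'
  have hle := ih _ (hd ▸ sum_natAbs_sub_chi_add_chi_lt he hf) _ hy' rfl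
  rw [sub_add_eq_add_sub, sum_add_chi_sub_chi] at hle
  simp only [hfS, heS, if_true] at hle
  omega

theorem exists_le_card_forall_ne {α : Type*} [Fintype α] (Θ : α → ℤ) :
    ∃ ℓ : ℤ, 0 ≤ ℓ ∧ ℓ ≤ Fintype.card α ∧ ∀ a, Θ a ≠ ℓ := by
  have hcard : (univ.image Θ).card < (Icc (0 : ℤ) (Fintype.card α)).card := by
    rw [Int.card_Icc]
    have := card_image_le (s := univ) (f := Θ)
    rw [card_univ] at this
    omega
  obtain ⟨ℓ, hℓ, hℓΘ⟩ := exists_mem_notMem_of_card_lt_card hcard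
  rw [mem_Icc] at hℓ
  exact ⟨ℓ, hℓ.1, hℓ.2, fun a ha => hℓΘ (ha ▸ mem_image_of_mem Θ (mem_univ a))⟩

theorem sum_superlevel_le {B : Set (E → ℤ)} (hB : MConvex B) {ρ : Finset E → ℤ}
    (hρ : IsRank B ρ) {z : E → ℤ} (hz : z ∈ B) {T : E → Finset E}
    (hT : ∀ e, e ∈ T e ∧ Tight ρ z (T e)) {Θ : E → ℤ} (hΘ : ∀ e, ∀ f ∈ T e, Θ e - 1 ≤ Θ f)
    {ℓ : ℤ} (hℓ : ∀ e, Θ e ≠ ℓ) :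
    ∀ y ∈ B, ∑ g ∈ univ.filter (ℓ ≤ Θ ·), y g ≤ ∑ g ∈ univ.filter (ℓ ≤ Θ ·), z g := by
  refine sum_le_of_forall_exchange_notMem hB hz fun e he f hf => ?_
  simp only [mem_filter, mem_univ, true_and, not_le] at he hf
  have hfT : f ∉ T e := fun hfT => by
    have := hΘ e f hfT
    have := hℓ e
    omega
  exact add_chi_sub_chi_notMem_of_tight hρ (hT e).2 (hT e).1 hfT

theorem sum_min_le_add (x b : E → ℤ) (S : Finset E) :
    ∑ e, min (x e) (b e) ≤ ∑ e ∈ S, x e + ∑ e ∈ Sᶜ, b e := by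
  rw [← sum_add_sum_compl S]
  gcongr <;> simp

theorem sum_min_eq_add {x b : E → ℤ} {S : Finset E} (hS : ∀ e ∈ S, x e ≤ b e)
    (hSc : ∀ e ∉ S, b e ≤ x e) :
    ∑ e, min (x e) (b e) = ∑ e ∈ S, x e + ∑ e ∈ Sᶜ, b e := by
  rw [← sum_add_sum_compl S]
  congr 1
  · exact sum_congr rfl fun e he => min_eq_left (hS e he)
  · exact sum_congr rfl fun e he => min_eq_right (hSc e (mem_compl.1 he))

theorem stmt10_general {N : Type*} [Fintype N]
    (b : E → ℤ) (B : N → Set (E → ℤ))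
    (hM : ∀ i, MConvex (B i))
    (ρ : N → Finset E → ℤ) (hρ : ∀ i, IsRank (B i) (ρ i))
    (z : N → E → ℤ) (hz : ∀ i, z i ∈ B i)
    (Θ : E → ℤ)
    (T : N → E → Finset E) (hT : ∀ i, MinTightAt (ρ i) (z i) (T i))
    (h1 : LevelInv1 b z Θ) (h2 : LevelInv2 Θ T)
    (hterm : ∀ e, (∑ i, z i e) < b e → Θ e = Fintype.card E) :
    ∀ z' : N → E → ℤ, (∀ i, z' i ∈ B i) →
      ∑ e : E, min (∑ i, z' i e) (b e) ≤ ∑ e : E, min (∑ i, z i e) (b e) := by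
  intro z' hz'
  obtain ⟨ℓ, hℓ0, hℓm, hℓ⟩ := exists_le_card_forall_ne Θ
  set S := univ.filter (ℓ ≤ Θ ·)
  have hopt (i : N) : ∑ e ∈ S, z' i e ≤ ∑ e ∈ S, z i e :=
    sum_superlevel_le (hM i) (hρ i) (hz i) (fun e => ⟨(hT i e).1, (hT i e).2.1⟩) (h2 i) hℓ _ (hz' i)
  have hnotOversold : ∀ e ∈ S, ∑ i, z i e ≤ b e := fun e he => by
    by_contra! hover
    have := h1 e hover
    have := hℓ e
    simp only [S, mem_filter, mem_univ, true_and] at he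
    omega
  have hnotUndersold : ∀ e ∉ S, b e ≤ ∑ i, z i e := fun e he => by
    by_contra! hunder
    have := hterm e hunder
    simp only [S, mem_filter, mem_univ, true_and] at he
    omega
  calc ∑ e, min (∑ i, z' i e) (b e) ≤ ∑ e ∈ S, ∑ i, z' i e + ∑ e ∈ Sᶜ, b e := sum_min_le_add _ _ S
    _ ≤ ∑ e ∈ S, ∑ i, z i e + ∑ e ∈ Sᶜ, b e := by
      rw [sum_comm, sum_comm (s := S)]
      gcongr ?_ + _
      exact sum_le_sum fun i _ => hopt i
    _ = ∑ e, min (∑ i, z i e) (b e) := (sum_min_eq_add hnotOversold hnotUndersold).symm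

/-- If the push-relabel algorithm terminates (every undersold item has level `m`)
while the level invariants hold, the allocation is an optimal solution to the
polymatroid sum problem. -/
theorem stmt10 {N : Type*} [Fintype N]
    (b : E → ℤ) (B : N → Set (E → ℤ))
    (hBox : ∀ i, B i ⊆ Box b) (hM : ∀ i, MConvex (B i))
    (ρ : N → Finset E → ℤ) (hρ : ∀ i, IsRank (B i) (ρ i))
    (z : N → E → ℤ) (hz : ∀ i, z i ∈ B i)
    (Θ : E → ℤ) (hΘ : ∀ e, 0 ≤ Θ e ∧ Θ e ≤ Fintype.card E)
    (T : N → E → Finset E) (hT : ∀ i, MinTightAt (ρ i) (z i) (T i))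
    (h1 : LevelInv1 b z Θ) (h2 : LevelInv2 Θ T)
    (hterm : ∀ e, (∑ i, z i e) < b e → Θ e = Fintype.card E) :
    ∀ z' : N → E → ℤ, (∀ i, z' i ∈ B i) →
      ∑ e : E, min (∑ i, z' i e) (b e) ≤ ∑ e : E, min (∑ i, z i e) (b e) :=
  stmt10_general b B hM ρ hρ z hz Θ T hT h1 h2 hterm
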